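/- arXiv:math/0410289 — 5 statements merged into one kernel-verified Lean document; each statement's English description precedes it below -/
import Mathlib

section
/- Let A ∈ ℤ^{d×n} and b₁, b₂ ∈ ℤ^d with Q^I_{A,b₁} ≠ ∅ and Q^I_{A,b₂} ≠ ∅. Then Q^I_{A,b₁+b₂} = Q^I_{A,b₁} ⊕ Q^I_{A,b₂} if and only if for every ⊑-minimal vector v ∈ Q^I_{A,b₁+b₂} there exists w ∈ Q^I_{A,b₁} with w ⊑ v. -/
def sqle {n : ℕ} (u v : Fin n → ℤ) : Prop :=
  ∀ j, 0 ≤ u j * v j ∧ |u j| ≤ |v j|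

def QF {d n : ℕ} (A : Matrix (Fin d) (Fin n) ℤ) (b : Fin d → ℤ) : Set (Fin n → ℤ) :=
  {z | A.mulVec z = b}

def PF {d n : ℕ} (A : Matrix (Fin d) (Fin n) ℤ) (b : Fin d → ℤ) : Set (Fin n → ℤ) :=
  {z | A.mulVec z = b ∧ 0 ≤ z}

def oplus {n : ℕ} (S T U : Set (Fin n → ℤ)) : Prop :=
  ∀ z ∈ S, ∃ z₁ ∈ T, ∃ z₂ ∈ U, sqle z₁ z ∧ sqle z₂ z ∧ z = z₁ + z₂

lemma sqle_refl {n : ℕ} (u : Fin n → ℤ) : sqle u u :=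
  fun j => ⟨mul_self_nonneg _, le_refl _⟩

lemma sqle_trans {n : ℕ} {u v w : Fin n → ℤ} (h1 : sqle u v) (h2 : sqle v w) :
    sqle u w := by
  intro j
  obtain ⟨ha, hb⟩ := h1 j
  obtain ⟨hc, hd⟩ := h2 j
  refine ⟨?_, le_trans hb hd⟩
  rcases eq_or_ne (v j) 0 with hv | hv
  · have hu : u j = 0 := abs_eq_zero.mp (le_antisymm (by simpa [hv] using hb) (abs_nonneg _))
    simp [hu]
  · have hv2 : 0 < v j * v j := mul_self_pos.mpr hv
    nlinarith [mul_nonneg ha hc]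

lemma sqle_sub {n : ℕ} {w z : Fin n → ℤ} (h : sqle w z) : sqle (z - w) z := by
  intro j
  obtain ⟨ha, hb⟩ := h j
  simp only [Pi.sub_apply]
  rcases lt_trichotomy (z j) 0 with hz | hz | hz
  · have hw : w j ≤ 0 := by nlinarith
    rw [abs_of_nonpos hw, abs_of_neg hz] at hb
    constructor
    · nlinarith
    · rw [abs_of_nonpos (by linarith), abs_of_neg hz]; linarith
  · have hw : w j = 0 := abs_eq_zero.mp (le_antisymm (by simpa [hz] using hb) (abs_nonneg _))
    simp [hw, hz]
  · have hw : 0 ≤ w j := by nlinarith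
    rw [abs_of_nonneg hw, abs_of_pos hz] at hb
    constructor
    · nlinarith
    · rw [abs_of_nonneg (by linarith), abs_of_pos hz]; linarith

theorem oplus_iff_min_elements_covered {d n : ℕ} (A : Matrix (Fin d) (Fin n) ℤ)
    (b₁ b₂ : Fin d → ℤ) (h₁ : (QF A b₁).Nonempty) (h₂ : (QF A b₂).Nonempty) :
    oplus (QF A (b₁ + b₂)) (QF A b₁) (QF A b₂) ↔
      ∀ v ∈ QF A (b₁ + b₂),
        (∀ v' ∈ QF A (b₁ + b₂), sqle v' v → v' = v) →
        ∃ w ∈ QF A b₁, sqle w v := by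
  classical
  constructor
  · intro hop v hv _
    obtain ⟨z₁, hz₁, z₂, hz₂, hs₁, hs₂, heq⟩ := hop v hv
    exact ⟨z₁, hz₁, hs₁⟩
  · intro hmin z hz
    set m : (Fin n → ℤ) → ℕ := fun v => ∑ j, (v j).natAbs with hm
    have hT : ∃ k, ∃ v, (v ∈ QF A (b₁ + b₂) ∧ sqle v z) ∧ m v = k :=
      ⟨m z, z, ⟨hz, sqle_refl z⟩, rfl⟩
    obtain ⟨v, ⟨hvQ, hvz⟩, hvk⟩ := Nat.find_spec hT
    have hleast : ∀ v', v' ∈ QF A (b₁ + b₂) → sqle v' z → m v ≤ m v' := by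
      intro v' hQ' hz'
      rw [hvk]
      exact Nat.find_min' hT ⟨v', ⟨hQ', hz'⟩, rfl⟩
    have hvmin : ∀ v' ∈ QF A (b₁ + b₂), sqle v' v → v' = v := by
      intro v' hQ' hvv
      have hz' : sqle v' z := sqle_trans hvv hvz
      have hle : m v ≤ m v' := hleast v' hQ' hz'
      have hcomp : ∀ j, (v' j).natAbs ≤ (v j).natAbs := by
        intro j
        have := (hvv j).2
        rw [Int.abs_eq_natAbs, Int.abs_eq_natAbs] at this
        exact_mod_cast this
      have hsum_le : m v' ≤ m v := Finset.sum_le_sum (fun j _ => hcomp j)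
      have hsum_eq : m v' = m v := le_antisymm hsum_le hle
      have heqj : ∀ j, (v' j).natAbs = (v j).natAbs := by
        have := (Finset.sum_eq_sum_iff_of_le (fun j _ => hcomp j)).mp hsum_eq
        exact fun j => this j (Finset.mem_univ j)
      funext j
      have hpr := (hvv j).1
      rcases Int.natAbs_eq_natAbs_iff.mp (heqj j) with h | h
      · exact h
      · rw [h] at hpr ⊢
        have hv0 : v j = 0 := by nlinarith [mul_self_nonneg (v j)]
        rw [hv0]; ring
    obtain ⟨w, hwQ, hws⟩ := hmin v hvQ hvmin
    have hwz : sqle w z := sqle_trans hws hvz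
    refine ⟨w, hwQ, z - w, ?_, hwz, sqle_sub hwz, by ring⟩
    show A.mulVec (z - w) = b₂
    have hz' : A.mulVec z = b₁ + b₂ := hz
    have hw' : A.mulVec w = b₁ := hwQ
    rw [Matrix.mulVec_sub, hz', hw']
    abel
end

section
/- Let v ∈ Q^I_{A,b₁+b₂}, let v̄ ∈ Q^I_{A,b₁+b₂} with v̄ ⊑ v, and let w̄ ∈ Q^I_{A,b₁} with w̄ ⊑ v̄. Then v = (w̄ + v − v̄) + (v̄ − w̄) with w̄ + v − v̄ ∈ Q^I_{A,b₁}, v̄ − w̄ ∈ Q^I_{A,b₂}, w̄ + v − v̄ ⊑ v, and v̄ − w̄ ⊑ v. -/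
lemma key_aux (a b c : ℤ) (h1 : 0 ≤ a * b) (h2 : |a| ≤ |b|)
    (h3 : 0 ≤ b * c) (h4 : |b| ≤ |c|) :
    (0 ≤ (b - a) * c ∧ |b - a| ≤ |c|) ∧
    (0 ≤ (a + c - b) * c ∧ |a + c - b| ≤ |c|) := by
  rcases le_or_gt 0 c with hc | hc <;> rcases le_or_gt 0 b with hb | hb <;>
    rcases le_or_gt 0 a with ha | ha <;>
    simp_all [abs_of_nonneg, abs_of_neg, abs_of_nonpos] <;>
    constructor <;> constructor <;>
      first
        | nlinarith
        | (rw [abs_le]; constructor <;> nlinarith)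

theorem decomposition_step {d n : ℕ} (A : Matrix (Fin d) (Fin n) ℤ)
    (b₁ b₂ : Fin d → ℤ) (v vbar wbar : Fin n → ℤ)
    (hv : v ∈ QF A (b₁ + b₂)) (hvbar : vbar ∈ QF A (b₁ + b₂))
    (hvv : sqle vbar v) (hwbar : wbar ∈ QF A b₁) (hwv : sqle wbar vbar) :
    v = (wbar + v - vbar) + (vbar - wbar) ∧
    (wbar + v - vbar) ∈ QF A b₁ ∧ (vbar - wbar) ∈ QF A b₂ ∧
    sqle (wbar + v - vbar) v ∧ sqle (vbar - wbar) v := by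
  simp only [QF, Set.mem_setOf_eq] at hv hvbar hwbar ⊢
  refine ⟨by ring, ?_, ?_, ?_, ?_⟩
  · rw [show wbar + v - vbar = wbar + (v - vbar) by ring,
      Matrix.mulVec_add, Matrix.mulVec_sub, hv, hvbar, hwbar]
    ring
  · rw [Matrix.mulVec_sub, hvbar, hwbar]
    funext i; simp [Pi.add_apply, Pi.sub_apply]
  · intro j
    have h := (key_aux (wbar j) (vbar j) (v j) (hwv j).1 (hwv j).2 (hvv j).1 (hvv j).2).2
    simpa [Pi.add_apply, Pi.sub_apply] using h
  · intro j
    exact (key_aux (wbar j) (vbar j) (v j) (hwv j).1 (hwv j).2 (hvv j).1 (hvv j).2).1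
end

section
/- Every matrix A ∈ ℤ^{d×n} has only finitely many extended atomic fibers, i.e., the set E(A) = {b ∈ ℤ^d : Q^I_{A,b} ≠ ∅ and Q^I_{A,b} is atomic} is finite. -/
def isAtomicExt {d n : ℕ} (A : Matrix (Fin d) (Fin n) ℤ) (b : Fin d → ℤ) : Prop :=
  ∀ b₁ b₂ : Fin d → ℤ, b = b₁ + b₂ →
    oplus (QF A b) (QF A b₁) (QF A b₂) → b = b₁ ∨ b = b₂

/-!
Write `z ∈ ℤⁿ` as the point `signSplit z ∈ ℕ^{n+n}` of its positive and negative parts, so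
that `signSplit z' ≤ signSplit z` forces `z' ⊑ z` and then also `z - z' ⊑ z`. Let `I(b)` be the
up-set of `ℕ^{n+n}` generated by the fibre `Az = b`. If `I(b) ⊆ I(b')`, every `z` in the fibre
of `b` lies above some `z'` in the fibre of `b'`, and `z = z' + (z - z')` shows that the fibre of
`b` is the sum of the fibres of `b'` and `b - b'`; atomicity then forces `b = b'` or `b' = 0`.
So the nonzero atomic `b` form an antichain for inclusion of the `I(b)`, which is finite by
Maclagan's theorem: the up-sets of `ℕᵏ` are well-quasi-ordered by reverse inclusion.

Maclagan's theorem goes by induction on `k`. An up-set of `ℕ × α` is a decreasing sequence of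
slices in `α`, which stabilises since the up-sets of `α` are well-founded; two such up-sets are
compared through their limits and through Higman's lemma applied to the finite words of slices
before stabilisation.
-/

theorem WellQuasiOrdered.sublistForall₂ {α : Type*} {r : α → α → Prop} [IsPreorder α r]
    (h : WellQuasiOrdered r) : WellQuasiOrdered (List.SublistForall₂ r) := by
  rw [← Set.partiallyWellOrderedOn_univ_iff] at h ⊢
  simpa using h.partiallyWellOrderedOn_sublistForall₂ r

theorem List.SublistForall₂.exists_le_getElem {α : Type*} {r : α → α → Prop} {l₁ l₂ : List α}
    (h : List.SublistForall₂ r l₁ l₂) :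
    ∀ i (hi : i < l₁.length), ∃ j, ∃ hj : j < l₂.length, i ≤ j ∧ r l₁[i] l₂[j] := by
  induction h with
  | nil => simp
  | cons hr _ ih =>
    rintro (_ | i) hi
    · exact ⟨0, by simp, le_rfl, hr⟩
    · obtain ⟨j, hj, hij, hrj⟩ := ih i (by simpa using hi)
      exact ⟨j + 1, by simpa using hj, by omega, hrj⟩
  | cons_right _ ih =>
    intro i hi
    obtain ⟨j, hj, hij, hrj⟩ := ih i hi
    exact ⟨j + 1, by simpa using hj, by omega, hrj⟩

namespace UpperSet

variable {α : Type*} [Preorder α]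

def slice (U : UpperSet (ℕ × α)) (t : ℕ) : UpperSet α :=
  ⟨{a | (t, a) ∈ U}, fun _ _ hab ha => U.upper (Prod.mk_le_mk.2 ⟨le_rfl, hab⟩) ha⟩

@[simp]
theorem mem_slice {U : UpperSet (ℕ × α)} {t : ℕ} {a : α} : a ∈ U.slice t ↔ (t, a) ∈ U :=
  Iff.rfl

theorem slice_antitone (U : UpperSet (ℕ × α)) : Antitone U.slice :=
  fun _ _ hst => coe_subset_coe.1 fun _ ha => U.upper (Prod.mk_le_mk.2 ⟨hst, le_rfl⟩) ha

theorem le_iff_forall_slice_le {U V : UpperSet (ℕ × α)} : U ≤ V ↔ ∀ t, U.slice t ≤ V.slice t := by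
  simp only [← coe_subset_coe, Set.subset_def, SetLike.mem_coe, mem_slice, Prod.forall]

theorem le_of_sublistForall₂_slices {U V : UpperSet (ℕ × α)} {M N : ℕ}
    (hU : ∀ t, M ≤ t → U.slice M = U.slice t) (hV : ∀ t, N ≤ t → V.slice N = V.slice t)
    (hlim : U.slice M ≤ V.slice N)
    (hslices : List.SublistForall₂ (· ≤ ·)
      ((List.range (M + 1)).map U.slice) ((List.range (N + 1)).map V.slice)) :
    U ≤ V := by
  refine le_iff_forall_slice_le.2 fun t => ?_
  rcases le_or_gt t M with htM | hMt
  · obtain ⟨u, hu, htu, hle⟩ := hslices.exists_le_getElem t (by simp; omega)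
    simp only [List.getElem_map, List.getElem_range] at hle
    exact hle.trans (V.slice_antitone htu)
  · calc U.slice t = U.slice M := (hU t hMt.le).symm
      _ ≤ V.slice N := hlim
      _ = V.slice (max t N) := hV _ (le_max_right t N)
      _ ≤ V.slice t := V.slice_antitone (le_max_left t N)

theorem wellQuasiOrderedLE_nat_prod [WellQuasiOrderedLE (UpperSet α)] :
    WellQuasiOrderedLE (UpperSet (ℕ × α)) := by
  refine ⟨fun f => ?_⟩
  choose N hN using fun i => WellFoundedLT.antitone_chain_condition (f i).slice_antitone
  obtain ⟨m, n, hmn, hlim, hslices⟩ := wellQuasiOrdered_le.prod wellQuasiOrdered_le.sublistForall₂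
    fun i => ((f i).slice (N i), (List.range (N i + 1)).map (f i).slice)
  exact ⟨m, n, hmn, le_of_sublistForall₂_slices (hN m) (hN n) hlim hslices⟩

theorem wellQuasiOrderedLE_fin_nat : ∀ k, WellQuasiOrderedLE (UpperSet (Fin k → ℕ))
  | 0 => Finite.to_wellQuasiOrderedLE
  | k + 1 =>
    have := wellQuasiOrderedLE_fin_nat k
    (map (Fin.consOrderIso fun _ => ℕ)).wellQuasiOrderedLE_iff.1 wellQuasiOrderedLE_nat_prod

end UpperSet

theorem Int.mul_nonneg_and_abs_le_iff_mem_uIcc {a b : ℤ} :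
    0 ≤ a * b ∧ |a| ≤ |b| ↔ a ∈ Set.uIcc 0 b := by
  wlog hb : 0 ≤ b generalizing a b
  · have h := this (a := -a) (b := -b) (by omega)
    rw [neg_mul_neg, abs_neg, abs_neg] at h
    rw [h, Set.mem_uIcc, Set.mem_uIcc]
    omega
  rw [Set.mem_uIcc, abs_of_nonneg hb, abs_le]
  constructor
  · rintro ⟨hab, h₁, h₂⟩
    rcases hb.eq_or_lt with rfl | hb
    · omega
    · exact .inl ⟨nonneg_of_mul_nonneg_left hab hb, h₂⟩
  · rintro (⟨h₁, h₂⟩ | ⟨h₁, h₂⟩) <;> exact ⟨by nlinarith, by omega, by omega⟩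

def signSplit {n : ℕ} (z : Fin n → ℤ) : Fin (n + n) → ℕ :=
  Fin.append (fun j => (z j).toNat) (fun j => (-z j).toNat)

theorem sqle_iff_mem_uIcc {n : ℕ} {u v : Fin n → ℤ} : sqle u v ↔ ∀ j, u j ∈ Set.uIcc 0 (v j) :=
  forall_congr' fun _ => Int.mul_nonneg_and_abs_le_iff_mem_uIcc

theorem sqle_of_signSplit_le {n : ℕ} {u v : Fin n → ℤ} (h : signSplit u ≤ signSplit v) :
    sqle u v := by
  refine sqle_iff_mem_uIcc.2 fun j => Set.mem_uIcc.2 ?_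
  have h₁ := h (Fin.castAdd n j)
  have h₂ := h (Fin.natAdd n j)
  simp only [signSplit, Fin.append_left, Fin.append_right] at h₁ h₂
  omega

theorem sqle_sub_of_sqle {n : ℕ} {u v : Fin n → ℤ} (h : sqle u v) : sqle (v - u) v := by
  simp only [sqle_iff_mem_uIcc, Pi.sub_apply, Set.mem_uIcc] at h ⊢
  exact fun j => by have := h j; omega

def fiberUpperSet {d n : ℕ} (A : Matrix (Fin d) (Fin n) ℤ) (b : Fin d → ℤ) :
    UpperSet (Fin (n + n) → ℕ) :=
  upperClosure (signSplit '' QF A b)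

theorem oplus_QF_of_fiberUpperSet_le {d n : ℕ} {A : Matrix (Fin d) (Fin n) ℤ} {b b' : Fin d → ℤ}
    (h : fiberUpperSet A b' ≤ fiberUpperSet A b) : oplus (QF A b) (QF A b') (QF A (b - b')) := by
  intro z hz
  obtain ⟨_, ⟨z', hz', rfl⟩, hle⟩ :=
    mem_upperClosure.1 (UpperSet.coe_subset_coe.2 h (subset_upperClosure ⟨z, hz, rfl⟩))
  have hz'z := sqle_of_signSplit_le hle
  refine ⟨z', hz', z - z', ?_, hz'z, sqle_sub_of_sqle hz'z, (add_sub_cancel z' z).symm⟩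
  simp only [QF, Set.mem_ofPred_eq, Matrix.mulVec_sub] at hz hz' ⊢
  rw [hz, hz']

theorem isAtomicExt.eq_of_fiberUpperSet_le {d n : ℕ} {A : Matrix (Fin d) (Fin n) ℤ}
    {b b' : Fin d → ℤ} (hb : isAtomicExt A b) (hb' : b' ≠ 0)
    (h : fiberUpperSet A b' ≤ fiberUpperSet A b) : b = b' :=
  (hb b' (b - b') (add_sub_cancel b' b).symm (oplus_QF_of_fiberUpperSet_le h)).resolve_right
    fun h => hb' (sub_eq_self.1 h.symm)

theorem extended_atomic_fibers_finite {d n : ℕ} (A : Matrix (Fin d) (Fin n) ℤ) :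
    {b : Fin d → ℤ | (QF A b).Nonempty ∧ isAtomicExt A b}.Finite := by
  have := UpperSet.wellQuasiOrderedLE_fin_nat (n + n)
  have hanti : IsAntichain (fun b b' => fiberUpperSet A b ≤ fiberUpperSet A b')
      ({b | (QF A b).Nonempty ∧ isAtomicExt A b} \ {0}) :=
    fun b hb b' hb' hne hle => hne (hb'.1.2.eq_of_fiberUpperSet_le hb.2 hle).symm
  have hwqo : WellQuasiOrdered fun b b' => fiberUpperSet A b ≤ fiberUpperSet A b' :=
    fun f => wellQuasiOrdered_le (fiberUpperSet A ∘ f)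
  exact (hanti.finite_of_wellQuasiOrdered hwqo).of_sdiff (Set.finite_singleton 0)
end

section
/- Given A ∈ ℤ^{d×n}, c ∈ ℝ^n, atomic fibers with right-hand sides b₁,…,b_k, and optimal solutions z_i^{opt} of min{cᵀz : Az = b_i, z ∈ ℤ^n_+} for each i, suppose P^I_{A,b} = ⨁_{i=1}^k α_i P^I_{A,b_i} with α_i ∈ ℤ_+. Then z̄ := Σ_{i=1}^k α_i z_i^{opt} is an optimal solution of min{cᵀz : Az = b, z ∈ ℤ^n_+}. -/
def isAtomicFiber {d n : ℕ} (A : Matrix (Fin d) (Fin n) ℤ) (b : Fin d → ℤ) : Prop :=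
  ∀ b₁ b₂ : Fin d → ℤ, b = b₁ + b₂ →
    oplus (PF A b) (PF A b₁) (PF A b₂) → b = b₁ ∨ b = b₂

theorem atomic_fibers_solve_ip {d n k : ℕ} (A : Matrix (Fin d) (Fin n) ℤ)
    (c : Fin n → ℝ) (b : Fin d → ℤ) (bs : Fin k → Fin d → ℤ) (α : Fin k → ℕ)
    (zopt : Fin k → Fin n → ℤ)
    (hatomic : ∀ i, isAtomicFiber A (bs i))
    (hfeas : ∀ i, zopt i ∈ PF A (bs i))
    (hopt : ∀ i, ∀ z ∈ PF A (bs i),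
      (∑ j, c j * ((zopt i) j : ℝ)) ≤ ∑ j, c j * (z j : ℝ))
    (hb : b = ∑ i, (α i : ℤ) • bs i)
    (hdecomp : ∀ z ∈ PF A b,
      ∃ w : (i : Fin k) → Fin (α i) → (Fin n → ℤ),
        (∀ i t, w i t ∈ PF A (bs i)) ∧ z = ∑ i, ∑ t, w i t)
    (hsolvable : (PF A b).Nonempty) :
    (∑ i, (α i : ℤ) • zopt i) ∈ PF A b ∧
    ∀ z ∈ PF A b,
      (∑ j, c j * ((∑ i, (α i : ℤ) • zopt i) j : ℝ)) ≤ ∑ j, c j * (z j : ℝ) := by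
  have hzbar : (∑ i, (α i : ℤ) • zopt i) ∈ PF A b := by
    constructor
    · rw [hb]
      simp only [← Matrix.mulVecLin_apply, map_sum, map_smul]
      refine Finset.sum_congr rfl fun i _ => ?_
      rw [Matrix.mulVecLin_apply, (hfeas i).1]
    · rw [Pi.le_def]
      intro j
      simp only [Finset.sum_apply, Pi.smul_apply, smul_eq_mul, Pi.zero_apply]
      refine Finset.sum_nonneg fun i _ => mul_nonneg (by positivity) ((hfeas i).2 j)
  refine ⟨hzbar, fun z hz => ?_⟩
  obtain ⟨w, hw, hzw⟩ := hdecomp z hz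
  have key : ∀ (v : Fin n → ℤ), (∑ j, c j * ((v j : ℤ) : ℝ)) = ∑ j, c j * (v j : ℝ) :=
    fun _ => rfl
  calc (∑ j, c j * ((∑ i, (α i : ℤ) • zopt i) j : ℝ))
      = ∑ i, ∑ t : Fin (α i), ∑ j, c j * ((zopt i) j : ℝ) := by
        simp only [Finset.sum_apply, Pi.smul_apply, smul_eq_mul]
        push_cast
        simp only [Finset.mul_sum]
        rw [Finset.sum_comm]
        refine Finset.sum_congr rfl fun i _ => ?_
        rw [Finset.sum_const, Finset.card_univ, Fintype.card_fin, nsmul_eq_mul,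
          Finset.mul_sum]
        refine Finset.sum_congr rfl fun j _ => by ring
    _ ≤ ∑ i, ∑ t : Fin (α i), ∑ j, c j * ((w i t) j : ℝ) := by
        refine Finset.sum_le_sum fun i _ => Finset.sum_le_sum fun t _ => ?_
        exact hopt i (w i t) (hw i t)
    _ = ∑ j, c j * (z j : ℝ) := by
        rw [hzw]
        simp only [Finset.sum_apply]
        push_cast
        simp only [Finset.mul_sum]
        rw [Finset.sum_comm]
        refine Finset.sum_congr rfl fun i _ => ?_
        rw [Finset.sum_comm]
end

section
/- Let A ∈ ℤ^{d×n} and b ∈ ℤ^d. If the fiber P^I_{A,b} is atomic, then any decomposition Q^I_{A,b} = Q^I_{A,b₁} ⊕ Q^I_{A,b₂} of the extended fiber with P^I_{A,b₁} ≠ ∅ and P^I_{A,b₂} ≠ ∅ induces a decomposition P^I_{A,b} = P^I_{A,b₁} ⊕ P^I_{A,b₂}. -/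
lemma sqle_nonneg {n : ℕ} {u z : Fin n → ℤ} (h : sqle u z) (hz : 0 ≤ z) : 0 ≤ u := by
  intro j
  obtain ⟨hprod, habs⟩ := h j
  rcases lt_or_eq_of_le (hz j) with hpos | hzero
  · exact nonneg_of_mul_nonneg_right (mul_comm (u j) (z j) ▸ hprod) hpos
  · have : |u j| ≤ 0 := by rw [← hzero] at habs; simpa using habs
    have := abs_nonpos_iff.mp this
    simp [this]

theorem ext_decomposition_induces_decomposition {d n : ℕ}
    (A : Matrix (Fin d) (Fin n) ℤ) (b b₁ b₂ : Fin d → ℤ)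
    (hatomic : isAtomicFiber A b) (hsum : b = b₁ + b₂)
    (hdec : oplus (QF A b) (QF A b₁) (QF A b₂))
    (h₁ : (PF A b₁).Nonempty) (h₂ : (PF A b₂).Nonempty) :
    oplus (PF A b) (PF A b₁) (PF A b₂) := by
  intro z hz
  obtain ⟨hAz, hznn⟩ := hz
  obtain ⟨z₁, hz₁, z₂, hz₂, hs₁, hs₂, heq⟩ := hdec z hAz
  exact ⟨z₁, ⟨hz₁, sqle_nonneg hs₁ hznn⟩, z₂, ⟨hz₂, sqle_nonneg hs₂ hznn⟩, hs₁, hs₂, heq⟩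
end
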